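/- Define for x, y > 0 with x·γUB + y·γRB > C_th: ξ_AF(x, y) = ((y·γRB + 1)(C_th − x·γUB))/(x·(x·γUB + y·γRB − C_th)) · (σ²/α) and ξ_DF(x, y) = C_th·σ²/(α·x), where γUB, γRB, σ², α, C_th > 0. Then ξ_AF(x, y) > ξ_DF(x, y) if and only if C_th² + C_th > (C_th + 1)·x·γUB + x·γUB·y·γRB. -/
import Mathlib


/-- Comparison of AF and DF outage thresholds: ξ_AF > ξ_DF iff
C_th² + C_th > (C_th + 1)·x·γUB + x·γUB·y·γRB. -/
theorem stmt_6 (γUB γRB σsq α Cth : ℝ)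
    (hγUB : 0 < γUB) (hγRB : 0 < γRB) (hσ : 0 < σsq) (hα : 0 < α) (hCth : 0 < Cth)
    (x y : ℝ) (hx : 0 < x) (hy : 0 < y)
    (hfeas : x * γUB + y * γRB > Cth) :
    (((y * γRB + 1) * (Cth - x * γUB)) / (x * (x * γUB + y * γRB - Cth)) * (σsq / α) >
        Cth * σsq / (α * x) ↔
      Cth ^ 2 + Cth > (Cth + 1) * (x * γUB) + x * γUB * (y * γRB)) := by
  have hD : 0 < x * (x * γUB + y * γRB - Cth) := by
    apply mul_pos hx; linarith
  have hαx : 0 < α * x := mul_pos hα hx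
  rw [gt_iff_lt, div_mul_div_comm, div_lt_div_iff₀ hαx (by positivity)]
  constructor <;> intro h <;> nlinarith [mul_pos hσ hαx, sq_nonneg σsq, mul_pos hx hγUB, mul_pos hy hγRB, mul_pos (mul_pos hσ hα) hD]
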